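/- Let w⁺, w⁻ : ℝ → M₂(ℂ) be given by w⁺ = [[0,0],[r,0]] and w⁻ = [[0,−conj(r)],[0,0]] for r ∈ L^∞(ℝ) with ‖r‖_∞ < 1, and let C_w(h) = C₊(h w⁻) + C₋(h w⁺), where C_± are the Cauchy projectors (Fourier multipliers by ±χ_{±ξ>0}). Then C_w is a bounded operator on matrix-valued L²(ℝ) with operator norm at most ‖r‖_∞ < 1, and hence I − C_w is invertible on L²(ℝ; M₂(ℂ)). -/

import Mathlib

open MeasureTheory Complex Matrix

/-- The square of the Frobenius `L²` norm of a matrix-valued function on `ℝ`. -/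
noncomputable def frobSq (h : ℝ → Matrix (Fin 2) (Fin 2) ℂ) : ENNReal :=
  ∑ i : Fin 2, ∑ j : Fin 2, (eLpNorm (fun lam => h lam i j) 2 volume) ^ 2

/-- The Beals–Coifman operator `C_w h = C₊(h w⁻) + C₋(h w⁺)` with
`w⁺ = [[0,0],[r,0]]`, `w⁻ = [[0,−conj r],[0,0]]`, written entrywise:
`h w⁻` has only its second column nonzero, equal to `h_{·0}·(−conj r)`, and
`h w⁺` has only its first column nonzero, equal to `h_{·1}·r`. -/
noncomputable def Cw (Cp Cm : (ℝ → ℂ) → (ℝ → ℂ)) (r : ℝ → ℂ)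
    (h : ℝ → Matrix (Fin 2) (Fin 2) ℂ) : ℝ → Matrix (Fin 2) (Fin 2) ℂ :=
  fun lam => Matrix.of fun i j =>
    if j = 0 then Cm (fun s => h s i 1 * r s) lam
    else Cp (fun s => h s i 0 * (-(starRingEnd ℂ) (r s))) lam

/-- Auxiliary: the matrix-valued function attached to a square of `Lp` elements. -/
noncomputable def matFun
    (u : Fin 2 → Fin 2 → (MeasureTheory.Lp ℂ 2 (MeasureTheory.volume : MeasureTheory.Measure ℝ))) :
    ℝ → Matrix (Fin 2) (Fin 2) ℂ :=
  fun lam => Matrix.of fun i j => u i j lam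

theorem stmt12 (Cp Cm : (ℝ → ℂ) → (ℝ → ℂ))
    -- the Cauchy projectors are bounded on `L²` with operator norm 1
    (hCpb : ∀ g : ℝ → ℂ, MemLp g 2 (volume : Measure ℝ) →
      MemLp (Cp g) 2 volume ∧ eLpNorm (Cp g) 2 volume ≤ eLpNorm g 2 volume)
    (hCmb : ∀ g : ℝ → ℂ, MemLp g 2 volume →
      MemLp (Cm g) 2 volume ∧ eLpNorm (Cm g) 2 volume ≤ eLpNorm g 2 volume)
    -- linearity (compatibility with differences)
    (hCpsub : ∀ g₁ g₂ : ℝ → ℂ, MemLp g₁ 2 volume → MemLp g₂ 2 volume →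
      Cp (g₁ - g₂) =ᵐ[volume] Cp g₁ - Cp g₂)
    (hCmsub : ∀ g₁ g₂ : ℝ → ℂ, MemLp g₁ 2 volume → MemLp g₂ 2 volume →
      Cm (g₁ - g₂) =ᵐ[volume] Cm g₁ - Cm g₂)
    -- respect for a.e. equality
    (hCpae : ∀ g₁ g₂ : ℝ → ℂ, g₁ =ᵐ[volume] g₂ → Cp g₁ =ᵐ[volume] Cp g₂)
    (hCmae : ∀ g₁ g₂ : ℝ → ℂ, g₁ =ᵐ[volume] g₂ → Cm g₁ =ᵐ[volume] Cm g₂)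
    (r : ℝ → ℂ) (hr : MemLp r ⊤ volume) (hrs : eLpNorm r ⊤ volume < 1) :
    -- `C_w` is bounded with operator norm at most `‖r‖_∞`
    (∀ h : ℝ → Matrix (Fin 2) (Fin 2) ℂ,
      (∀ i j : Fin 2, MemLp (fun lam => h lam i j) 2 volume) →
      frobSq (Cw Cp Cm r h) ≤ (eLpNorm r ⊤ volume) ^ 2 * frobSq h) ∧
    -- hence `I − C_w` is invertible on matrix-valued `L²(ℝ)`
    (∀ F : ℝ → Matrix (Fin 2) (Fin 2) ℂ,
      (∀ i j : Fin 2, MemLp (fun lam => F lam i j) 2 volume) →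
      (∃ h : ℝ → Matrix (Fin 2) (Fin 2) ℂ,
        (∀ i j : Fin 2, MemLp (fun lam => h lam i j) 2 volume) ∧
        ∀ i j : Fin 2,
          (fun lam => h lam i j - Cw Cp Cm r h lam i j) =ᵐ[volume]
            fun lam => F lam i j) ∧
      ∀ h₁ h₂ : ℝ → Matrix (Fin 2) (Fin 2) ℂ,
        (∀ i j : Fin 2, MemLp (fun lam => h₁ lam i j) 2 volume) →
        (∀ i j : Fin 2, MemLp (fun lam => h₂ lam i j) 2 volume) →
        (∀ i j : Fin 2,
          (fun lam => h₁ lam i j - Cw Cp Cm r h₁ lam i j) =ᵐ[volume]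
            fun lam => F lam i j) →
        (∀ i j : Fin 2,
          (fun lam => h₂ lam i j - Cw Cp Cm r h₂ lam i j) =ᵐ[volume]
            fun lam => F lam i j) →
        ∀ i j : Fin 2,
          (fun lam => h₁ lam i j) =ᵐ[volume] fun lam => h₂ lam i j) := by
  classical
  have two_ne : (2 : ENNReal) ≠ 0 := by norm_num
  set c := eLpNorm r ⊤ volume with hcdef
  have hcne : c ≠ ⊤ := hr.2.ne
  -- multiplication bounds
  have keyM : ∀ g : ℝ → ℂ, MemLp g 2 volume →
      MemLp (fun s => g s * r s) 2 volume ∧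
      eLpNorm (fun s => g s * r s) 2 volume ≤ c * eLpNorm g 2 volume := by
    intro g hg
    have hb := eLpNorm_le_eLpNorm_top_mul_eLpNorm 2 r hg.aestronglyMeasurable
      (fun a b => b * a) 1 (Filter.Eventually.of_forall fun x => by
        simp [nnnorm_mul, mul_comm])
    simp only [ENNReal.coe_one, one_mul] at hb
    exact ⟨⟨hg.aestronglyMeasurable.mul hr.aestronglyMeasurable,
      lt_of_le_of_lt hb (ENNReal.mul_lt_top hr.2 hg.2)⟩, hb⟩
  have keyP : ∀ g : ℝ → ℂ, MemLp g 2 volume →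
      MemLp (fun s => g s * (-(starRingEnd ℂ) (r s))) 2 volume ∧
      eLpNorm (fun s => g s * (-(starRingEnd ℂ) (r s))) 2 volume ≤ c * eLpNorm g 2 volume := by
    intro g hg
    have hb := eLpNorm_le_eLpNorm_top_mul_eLpNorm 2 r hg.aestronglyMeasurable
      (fun a b => b * (-(starRingEnd ℂ) a)) 1 (Filter.Eventually.of_forall fun x => by
        simp [nnnorm_mul, mul_comm])
    simp only [ENNReal.coe_one, one_mul] at hb
    have hasm : AEStronglyMeasurable (fun s => -(starRingEnd ℂ) (r s)) volume :=
      (continuous_star.comp_aestronglyMeasurable hr.aestronglyMeasurable).neg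
    exact ⟨⟨hg.aestronglyMeasurable.mul hasm,
      lt_of_le_of_lt hb (ENNReal.mul_lt_top hr.2 hg.2)⟩, hb⟩
  -- entrywise membership and norm bound for `Cw`
  have bmem : ∀ (h : ℝ → Matrix (Fin 2) (Fin 2) ℂ),
      (∀ i j : Fin 2, MemLp (fun lam => h lam i j) 2 volume) → ∀ i j : Fin 2,
      MemLp (fun lam => Cw Cp Cm r h lam i j) 2 volume ∧
      eLpNorm (fun lam => Cw Cp Cm r h lam i j) 2 volume ≤
        c * eLpNorm (fun lam => h lam i (if j = 0 then 1 else 0)) 2 volume := by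
    intro h hh i j
    fin_cases j <;> simp only [Fin.zero_eta, Fin.mk_one, Fin.isValue]
    · have hg := keyM _ (hh i 1)
      have h1 := hCmb _ hg.1
      have e : (fun lam => Cw Cp Cm r h lam i 0) = Cm fun s => h s i 1 * r s := by
        funext lam; simp [Cw]
      refine ⟨by rw [e]; exact h1.1, ?_⟩
      rw [e]
      simpa using h1.2.trans hg.2
    · have hg := keyP _ (hh i 0)
      have h1 := hCpb _ hg.1
      have e : (fun lam => Cw Cp Cm r h lam i 1) =
          Cp fun s => h s i 0 * (-(starRingEnd ℂ) (r s)) := by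
        funext lam; simp [Cw]
      refine ⟨by rw [e]; exact h1.1, ?_⟩
      rw [e]
      simpa using h1.2.trans hg.2
  -- entrywise norm bound for differences of `Cw`
  have bdiff : ∀ (h₁ h₂ : ℝ → Matrix (Fin 2) (Fin 2) ℂ),
      (∀ i j : Fin 2, MemLp (fun lam => h₁ lam i j) 2 volume) →
      (∀ i j : Fin 2, MemLp (fun lam => h₂ lam i j) 2 volume) → ∀ i j : Fin 2,
      eLpNorm (fun lam => Cw Cp Cm r h₁ lam i j - Cw Cp Cm r h₂ lam i j) 2 volume ≤
        c * eLpNorm (fun lam => h₁ lam i (if j = 0 then 1 else 0)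
            - h₂ lam i (if j = 0 then 1 else 0)) 2 volume := by
    intro h₁ h₂ hh₁ hh₂ i j
    fin_cases j <;> simp only [Fin.zero_eta, Fin.mk_one, Fin.isValue]
    · have hg₁ := keyM _ (hh₁ i 1)
      have hg₂ := keyM _ (hh₂ i 1)
      have hgd := keyM (fun s => h₁ s i 1 - h₂ s i 1) ((hh₁ i 1).sub (hh₂ i 1))
      have e2 : ((fun s => h₁ s i 1 * r s) - fun s => h₂ s i 1 * r s)
          = fun s => (h₁ s i 1 - h₂ s i 1) * r s := by
        funext s; simp only [Pi.sub_apply]; ring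
      have hmemd : MemLp ((fun s => h₁ s i 1 * r s) - fun s => h₂ s i 1 * r s) 2 volume := by
        rw [e2]; exact hgd.1
      have hsub := hCmsub _ _ hg₁.1 hg₂.1
      have main : eLpNorm (fun lam => Cw Cp Cm r h₁ lam i 0 - Cw Cp Cm r h₂ lam i 0) 2 volume ≤
          c * eLpNorm (fun lam => h₁ lam i 1 - h₂ lam i 1) 2 volume := by
        calc eLpNorm (fun lam => Cw Cp Cm r h₁ lam i 0 - Cw Cp Cm r h₂ lam i 0) 2 volume
            = eLpNorm (Cm (fun s => h₁ s i 1 * r s) - Cm (fun s => h₂ s i 1 * r s)) 2 volume := by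
              rfl
          _ = eLpNorm (Cm ((fun s => h₁ s i 1 * r s) - fun s => h₂ s i 1 * r s)) 2 volume :=
              (eLpNorm_congr_ae hsub).symm
          _ ≤ eLpNorm ((fun s => h₁ s i 1 * r s) - fun s => h₂ s i 1 * r s) 2 volume :=
              (hCmb _ hmemd).2
          _ = eLpNorm (fun s => (h₁ s i 1 - h₂ s i 1) * r s) 2 volume := by rw [e2]
          _ ≤ c * eLpNorm (fun lam => h₁ lam i 1 - h₂ lam i 1) 2 volume := hgd.2
      simpa using main
    · have hg₁ := keyP _ (hh₁ i 0)
      have hg₂ := keyP _ (hh₂ i 0)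
      have hgd := keyP (fun s => h₁ s i 0 - h₂ s i 0) ((hh₁ i 0).sub (hh₂ i 0))
      have e2 : ((fun s => h₁ s i 0 * (-(starRingEnd ℂ) (r s)))
            - fun s => h₂ s i 0 * (-(starRingEnd ℂ) (r s)))
          = fun s => (h₁ s i 0 - h₂ s i 0) * (-(starRingEnd ℂ) (r s)) := by
        funext s; simp only [Pi.sub_apply]; ring
      have hmemd : MemLp ((fun s => h₁ s i 0 * (-(starRingEnd ℂ) (r s)))
          - fun s => h₂ s i 0 * (-(starRingEnd ℂ) (r s))) 2 volume := by
        rw [e2]; exact hgd.1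
      have hsub := hCpsub _ _ hg₁.1 hg₂.1
      have main : eLpNorm (fun lam => Cw Cp Cm r h₁ lam i 1 - Cw Cp Cm r h₂ lam i 1) 2 volume ≤
          c * eLpNorm (fun lam => h₁ lam i 0 - h₂ lam i 0) 2 volume := by
        calc eLpNorm (fun lam => Cw Cp Cm r h₁ lam i 1 - Cw Cp Cm r h₂ lam i 1) 2 volume
            = eLpNorm (Cp (fun s => h₁ s i 0 * (-(starRingEnd ℂ) (r s)))
                - Cp (fun s => h₂ s i 0 * (-(starRingEnd ℂ) (r s)))) 2 volume := by
              rfl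
          _ = eLpNorm (Cp ((fun s => h₁ s i 0 * (-(starRingEnd ℂ) (r s)))
                - fun s => h₂ s i 0 * (-(starRingEnd ℂ) (r s)))) 2 volume :=
              (eLpNorm_congr_ae hsub).symm
          _ ≤ eLpNorm ((fun s => h₁ s i 0 * (-(starRingEnd ℂ) (r s)))
                - fun s => h₂ s i 0 * (-(starRingEnd ℂ) (r s))) 2 volume :=
              (hCpb _ hmemd).2
          _ = eLpNorm (fun s => (h₁ s i 0 - h₂ s i 0) * (-(starRingEnd ℂ) (r s))) 2 volume := by
              rw [e2]
          _ ≤ c * eLpNorm (fun lam => h₁ lam i 0 - h₂ lam i 0) 2 volume := hgd.2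
      simpa using main
  constructor
  · -- Part 1: norm bound
    intro h hh
    calc frobSq (Cw Cp Cm r h)
        ≤ ∑ i : Fin 2, ∑ j : Fin 2,
            (c * eLpNorm (fun lam => h lam i (if j = 0 then 1 else 0)) 2 volume) ^ 2 := by
          simp only [frobSq]
          refine Finset.sum_le_sum fun i _ => Finset.sum_le_sum fun j _ => ?_
          exact pow_le_pow_left' (bmem h hh i j).2 2
      _ = c ^ 2 * frobSq h := by
          simp only [frobSq, Fin.sum_univ_two]
          norm_num [mul_pow]
          ring
  · -- Part 2: invertibility
    intro F hF
    haveI : Fact ((1 : ENNReal) ≤ 2) := ⟨one_le_two⟩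
    -- uniqueness
    have uniq : ∀ h₁ h₂ : ℝ → Matrix (Fin 2) (Fin 2) ℂ,
        (∀ i j : Fin 2, MemLp (fun lam => h₁ lam i j) 2 volume) →
        (∀ i j : Fin 2, MemLp (fun lam => h₂ lam i j) 2 volume) →
        (∀ i j : Fin 2, (fun lam => h₁ lam i j - Cw Cp Cm r h₁ lam i j) =ᵐ[volume]
          fun lam => F lam i j) →
        (∀ i j : Fin 2, (fun lam => h₂ lam i j - Cw Cp Cm r h₂ lam i j) =ᵐ[volume]
          fun lam => F lam i j) →
        ∀ i j : Fin 2, (fun lam => h₁ lam i j) =ᵐ[volume] fun lam => h₂ lam i j := by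
      intro h₁ h₂ hm₁ hm₂ hs₁ hs₂ i j
      have hd : ∀ j' : Fin 2, (fun lam => h₁ lam i j' - h₂ lam i j') =ᵐ[volume]
          fun lam => Cw Cp Cm r h₁ lam i j' - Cw Cp Cm r h₂ lam i j' := by
        intro j'
        filter_upwards [hs₁ i j', hs₂ i j'] with lam e1 e2
        linear_combination e1 - e2
      have hstep : ∀ j' : Fin 2,
          eLpNorm (fun lam => h₁ lam i j' - h₂ lam i j') 2 volume ≤
          c * eLpNorm (fun lam => h₁ lam i (if j' = 0 then 1 else 0)
              - h₂ lam i (if j' = 0 then 1 else 0)) 2 volume := by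
        intro j'
        calc eLpNorm (fun lam => h₁ lam i j' - h₂ lam i j') 2 volume
            = eLpNorm (fun lam => Cw Cp Cm r h₁ lam i j' - Cw Cp Cm r h₂ lam i j') 2 volume :=
              eLpNorm_congr_ae (hd j')
          _ ≤ _ := bdiff h₁ h₂ hm₁ hm₂ i j'
      have e0 := hstep 0
      have e1 := hstep 1
      rw [if_pos rfl] at e0
      rw [if_neg (by decide : ¬ (1 : Fin 2) = 0)] at e1
      have hfin : eLpNorm (fun lam => h₁ lam i 0 - h₂ lam i 0) 2 volume ≠ ⊤ :=
        ((hm₁ i 0).sub (hm₂ i 0)).2.ne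
      have hz0 : eLpNorm (fun lam => h₁ lam i 0 - h₂ lam i 0) 2 volume = 0 := by
        by_contra hne
        have hcc : c * c < 1 := by
          calc c * c ≤ c * 1 := mul_le_mul_right hrs.le c
            _ = c := mul_one c
            _ < 1 := hrs
        have hchain : eLpNorm (fun lam => h₁ lam i 0 - h₂ lam i 0) 2 volume ≤
            (c * c) * eLpNorm (fun lam => h₁ lam i 0 - h₂ lam i 0) 2 volume := by
          calc eLpNorm (fun lam => h₁ lam i 0 - h₂ lam i 0) 2 volume
              ≤ c * eLpNorm (fun lam => h₁ lam i 1 - h₂ lam i 1) 2 volume := e0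
            _ ≤ c * (c * eLpNorm (fun lam => h₁ lam i 0 - h₂ lam i 0) 2 volume) :=
                mul_le_mul_right e1 c
            _ = (c * c) * eLpNorm (fun lam => h₁ lam i 0 - h₂ lam i 0) 2 volume := by
                rw [mul_assoc]
        have hlt : (c * c) * eLpNorm (fun lam => h₁ lam i 0 - h₂ lam i 0) 2 volume <
            1 * eLpNorm (fun lam => h₁ lam i 0 - h₂ lam i 0) 2 volume :=
          (ENNReal.mul_lt_mul_iff_left hne hfin).mpr hcc
        rw [one_mul] at hlt
        exact absurd (lt_of_le_of_lt hchain hlt) (lt_irrefl _)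
      have hz1 : eLpNorm (fun lam => h₁ lam i 1 - h₂ lam i 1) 2 volume = 0 :=
        le_antisymm (by rw [hz0, mul_zero] at e1; exact e1) (zero_le)
      have hz : eLpNorm (fun lam => h₁ lam i j - h₂ lam i j) 2 volume = 0 := by
        fin_cases j
        · exact hz0
        · exact hz1
      have hae0 := (eLpNorm_eq_zero_iff
        (((hm₁ i j).sub (hm₂ i j)).aestronglyMeasurable) two_ne).mp hz
      filter_upwards [hae0] with lam hl
      have hl' : h₁ lam i j - h₂ lam i j = 0 := hl
      exact sub_eq_zero.mp hl'
    -- existence via Banach fixed point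
    have hmemu : ∀ u : Fin 2 → Fin 2 → Lp ℂ 2 (volume : Measure ℝ), ∀ i j : Fin 2,
        MemLp (fun lam => matFun u lam i j) 2 volume := fun u i j => Lp.memLp (u i j)
    set T : (Fin 2 → Fin 2 → Lp ℂ 2 (volume : Measure ℝ)) →
        (Fin 2 → Fin 2 → Lp ℂ 2 (volume : Measure ℝ)) :=
      fun u i j => (hF i j).toLp _ + ((bmem (matFun u) (hmemu u) i j).1).toLp _ with hT
    have hK : ((c.toNNReal : NNReal) : ENNReal) = c := ENNReal.coe_toNNReal hcne
    have hlip : LipschitzWith c.toNNReal T := by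
      intro u v
      rw [hK]
      refine edist_pi_le_iff.mpr fun i => edist_pi_le_iff.mpr fun j => ?_
      have h1 : edist (T u i j) (T v i j) =
          eLpNorm ((fun lam => Cw Cp Cm r (matFun u) lam i j)
            - fun lam => Cw Cp Cm r (matFun v) lam i j) 2 volume := by
        rw [hT]
        simp only
        rw [edist_dist, dist_add_left, ← edist_dist]
        exact Lp.edist_toLp_toLp _ _ _ _
      rw [h1]
      have h2 : eLpNorm ((fun lam => Cw Cp Cm r (matFun u) lam i j)
            - fun lam => Cw Cp Cm r (matFun v) lam i j) 2 volume ≤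
          c * eLpNorm (fun lam => matFun u lam i (if j = 0 then 1 else 0)
            - matFun v lam i (if j = 0 then 1 else 0)) 2 volume :=
        bdiff (matFun u) (matFun v) (hmemu u) (hmemu v) i j
      refine h2.trans ?_
      have h3 : eLpNorm (fun lam => matFun u lam i (if j = 0 then 1 else 0)
            - matFun v lam i (if j = 0 then 1 else 0)) 2 volume =
          edist (u i (if j = 0 then 1 else 0)) (v i (if j = 0 then 1 else 0)) :=
        (Lp.edist_def _ _).symm
      rw [h3]
      exact mul_le_mul_right
        ((edist_le_pi_edist (u i) (v i) _).trans (edist_le_pi_edist u v i)) c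
    have hK1 : c.toNNReal < 1 := by
      have h4 : ((c.toNNReal : NNReal) : ENNReal) < 1 := by rw [hK]; exact hrs
      exact_mod_cast h4
    have hcontr : ContractingWith c.toNNReal T := ⟨hK1, hlip⟩
    obtain ⟨u, hu, -, -⟩ := hcontr.exists_fixedPoint 0 (edist_ne_top _ _)
    refine ⟨⟨matFun u, hmemu u, ?_⟩, uniq⟩
    intro i j
    have hfix := (congrFun (congrFun hu i) j).symm
    rw [hT] at hfix
    simp only at hfix
    have hadd := Lp.coeFn_add ((hF i j).toLp _) (((bmem (matFun u) (hmemu u) i j).1).toLp _)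
    have hA := (hF i j).coeFn_toLp
    have hB := ((bmem (matFun u) (hmemu u) i j).1).coeFn_toLp
    filter_upwards [hadd, hA, hB] with lam eadd eA eB
    have e : u i j lam = F lam i j + Cw Cp Cm r (matFun u) lam i j := by
      rw [hfix]
      calc ((hF i j).toLp _ + ((bmem (matFun u) (hmemu u) i j).1).toLp _) lam
          = ((hF i j).toLp _) lam + (((bmem (matFun u) (hmemu u) i j).1).toLp _) lam := eadd
        _ = F lam i j + Cw Cp Cm r (matFun u) lam i j := by rw [eA, eB]
    show matFun u lam i j - Cw Cp Cm r (matFun u) lam i j = F lam i j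
    have e5 : matFun u lam i j = u i j lam := rfl
    rw [e5, e]
    ring
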